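/- Let A, B : (0,∞) → ℝ be continuous with B nowhere zero, and let C : (0,∞) → ℝ be differentiable with τ · C'(τ) = A(τ)/B(τ) − 1 for all τ > 0. Define Φ : (0,∞) × ℝ × ℝ → ℝ³ by Φ(τ,θ,φ) = τ e^{C(τ)} ( sin θ cos φ, sin θ sin φ, cos θ ). Then for all (τ,θ,φ): (i) ‖∂Φ/∂τ‖² = e^{2C(τ)} (A(τ)/B(τ))²; (ii) ‖∂Φ/∂θ‖² = e^{2C(τ)} τ²; (iii) ‖∂Φ/∂φ‖² = e^{2C(τ)} τ² sin²θ; (iv) the three partial-derivative vectors ∂Φ/∂τ, ∂Φ/∂θ, ∂Φ/∂φ are pairwise orthogonal; and (v) ‖Φ(τ,θ,φ)‖² = τ² e^{2C(τ)}. -/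

import Mathlib

/-! Write `Φ(τ, θ, φ) = ρ(τ) • n(θ, φ)` with `ρ(τ) = τ e^{C(τ)}` and `n` the unit-sphere embedding.
The equation `τ C' = A/B − 1` is exactly what makes `ρ' = e^{C} A/B`, and the vectors
`n, ∂_θ n, ∂_φ n` are pairwise orthogonal with norms `1, 1, |sin θ|`; every claim then follows by
pulling the scalars `ρ'` and `ρ` out of norms and inner products. -/

open Real Set

/-- The three-dimensional Kruskal-type "unwrapping" map
`(τ, θ, φ) ↦ τ e^{C(τ)} (sin θ cos φ, sin θ sin φ, cos θ)`. -/
noncomputable def kruskalMap3 (C : ℝ → ℝ) (τ θ φ : ℝ) : EuclideanSpace ℝ (Fin 3) :=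
  (WithLp.equiv 2 (Fin 3 → ℝ)).symm
    ![τ * Real.exp (C τ) * (Real.sin θ * Real.cos φ),
      τ * Real.exp (C τ) * (Real.sin θ * Real.sin φ),
      τ * Real.exp (C τ) * Real.cos θ]

theorem hasDerivAt_euclideanSpace_vec3 {f₀ f₁ f₂ : ℝ → ℝ} {a b c x : ℝ} (h₀ : HasDerivAt f₀ a x)
    (h₁ : HasDerivAt f₁ b x) (h₂ : HasDerivAt f₂ c x) :
    HasDerivAt (fun t => !₂[f₀ t, f₁ t, f₂ t]) !₂[a, b, c] x := by
  have h : HasDerivAt (fun t => ![f₀ t, f₁ t, f₂ t]) ![a, b, c] x := by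
    rw [hasDerivAt_pi]
    intro i
    fin_cases i <;> assumption
  exact (PiLp.hasFDerivAt_toLp (𝕜 := ℝ) 2 _).comp_hasDerivAt x h

theorem EuclideanSpace.real_norm_sq_vec3 (a b c : ℝ) :
    ‖!₂[a, b, c]‖ ^ 2 = a ^ 2 + b ^ 2 + c ^ 2 := by
  simp [EuclideanSpace.real_norm_sq_eq, Fin.sum_univ_three]

theorem EuclideanSpace.real_inner_vec3 (a b c a' b' c' : ℝ) :
    inner ℝ !₂[a, b, c] !₂[a', b', c'] = a * a' + b * b' + c * c' := by
  simp only [PiLp.inner_apply, RCLike.inner_apply, ringHom_apply, Fin.sum_univ_three,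
    Matrix.cons_val_zero, Matrix.cons_val_one, Matrix.cons_val]
  ring

theorem hasDerivAt_mul_exp_comp {C : ℝ → ℝ} {a τ : ℝ} (hτ : τ ≠ 0)
    (hC : HasDerivAt C ((a - 1) / τ) τ) :
    HasDerivAt (fun t => t * exp (C t)) (exp (C τ) * a) τ := by
  refine ((hasDerivAt_id' τ).mul hC.exp).congr_deriv ?_
  field_simp
  ring

noncomputable def sphereDir (θ φ : ℝ) : EuclideanSpace ℝ (Fin 3) :=
  !₂[sin θ * cos φ, sin θ * sin φ, cos θ]

noncomputable def sphereDirPolar (θ φ : ℝ) : EuclideanSpace ℝ (Fin 3) :=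
  !₂[cos θ * cos φ, cos θ * sin φ, -sin θ]

noncomputable def sphereDirAzimuth (θ φ : ℝ) : EuclideanSpace ℝ (Fin 3) :=
  !₂[-(sin θ * sin φ), sin θ * cos φ, 0]

section SphereDir

variable (θ φ : ℝ)

theorem hasDerivAt_sphereDir_polar : HasDerivAt (sphereDir · φ) (sphereDirPolar θ φ) θ :=
  hasDerivAt_euclideanSpace_vec3 ((hasDerivAt_sin θ).mul_const _)
    ((hasDerivAt_sin θ).mul_const _) (hasDerivAt_cos θ)

theorem hasDerivAt_sphereDir_azimuth :
    HasDerivAt (sphereDir θ ·) (sphereDirAzimuth θ φ) φ :=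
  (hasDerivAt_euclideanSpace_vec3 ((hasDerivAt_cos φ).const_mul (sin θ))
    ((hasDerivAt_sin φ).const_mul (sin θ)) (hasDerivAt_const φ (cos θ))).congr_deriv
    (by rw [sphereDirAzimuth, mul_neg])

theorem norm_sphereDir_sq : ‖sphereDir θ φ‖ ^ 2 = 1 := by
  rw [sphereDir, EuclideanSpace.real_norm_sq_vec3]
  linear_combination sin θ ^ 2 * sin_sq_add_cos_sq φ + sin_sq_add_cos_sq θ

theorem norm_sphereDirPolar_sq : ‖sphereDirPolar θ φ‖ ^ 2 = 1 := by
  rw [sphereDirPolar, EuclideanSpace.real_norm_sq_vec3]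
  linear_combination cos θ ^ 2 * sin_sq_add_cos_sq φ + sin_sq_add_cos_sq θ

theorem norm_sphereDirAzimuth_sq : ‖sphereDirAzimuth θ φ‖ ^ 2 = sin θ ^ 2 := by
  rw [sphereDirAzimuth, EuclideanSpace.real_norm_sq_vec3]
  linear_combination sin θ ^ 2 * sin_sq_add_cos_sq φ

theorem inner_sphereDir_sphereDirPolar : inner ℝ (sphereDir θ φ) (sphereDirPolar θ φ) = 0 := by
  rw [sphereDir, sphereDirPolar, EuclideanSpace.real_inner_vec3]
  linear_combination sin θ * cos θ * sin_sq_add_cos_sq φ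

theorem inner_sphereDir_sphereDirAzimuth :
    inner ℝ (sphereDir θ φ) (sphereDirAzimuth θ φ) = 0 := by
  rw [sphereDir, sphereDirAzimuth, EuclideanSpace.real_inner_vec3]
  ring

theorem inner_sphereDirPolar_sphereDirAzimuth :
    inner ℝ (sphereDirPolar θ φ) (sphereDirAzimuth θ φ) = 0 := by
  rw [sphereDirPolar, sphereDirAzimuth, EuclideanSpace.real_inner_vec3]
  ring

end SphereDir

theorem kruskalMap3_eq_smul_sphereDir (C : ℝ → ℝ) (τ θ φ : ℝ) :
    kruskalMap3 C τ θ φ = (τ * exp (C τ)) • sphereDir θ φ := by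
  ext i
  fin_cases i <;> simp [kruskalMap3, sphereDir, mul_assoc]

theorem kruskal_unwrapping_three_dim_general
    (A B : ℝ → ℝ)
    (C : ℝ → ℝ) (hC : ∀ τ ∈ Ioi (0:ℝ), HasDerivAt C ((A τ / B τ - 1) / τ) τ) :
    ∀ τ ∈ Ioi (0:ℝ), ∀ θ φ : ℝ,
      ‖deriv (fun τ' => kruskalMap3 C τ' θ φ) τ‖^2
          = Real.exp (2 * C τ) * (A τ / B τ)^2 ∧
      ‖deriv (fun θ' => kruskalMap3 C τ θ' φ) θ‖^2
          = Real.exp (2 * C τ) * τ^2 ∧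
      ‖deriv (fun φ' => kruskalMap3 C τ θ φ') φ‖^2
          = Real.exp (2 * C τ) * τ^2 * (Real.sin θ)^2 ∧
      (inner ℝ (deriv (fun τ' => kruskalMap3 C τ' θ φ) τ)
             (deriv (fun θ' => kruskalMap3 C τ θ' φ) θ) : ℝ) = 0 ∧
      (inner ℝ (deriv (fun τ' => kruskalMap3 C τ' θ φ) τ)
             (deriv (fun φ' => kruskalMap3 C τ θ φ') φ) : ℝ) = 0 ∧
      (inner ℝ (deriv (fun θ' => kruskalMap3 C τ θ' φ) θ)
             (deriv (fun φ' => kruskalMap3 C τ θ φ') φ) : ℝ) = 0 ∧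
      ‖kruskalMap3 C τ θ φ‖^2 = τ^2 * Real.exp (2 * C τ) := by
  intro τ hτ θ φ
  simp only [kruskalMap3_eq_smul_sphereDir]
  have hρ : HasDerivAt (fun t => (t * exp (C t)) • sphereDir θ φ)
      ((exp (C τ) * (A τ / B τ)) • sphereDir θ φ) τ :=
    (hasDerivAt_mul_exp_comp (ne_of_gt hτ) (hC τ hτ)).smul_const _
  have hθ : HasDerivAt (fun θ' => (τ * exp (C τ)) • sphereDir θ' φ)
      ((τ * exp (C τ)) • sphereDirPolar θ φ) θ :=
    (hasDerivAt_sphereDir_polar θ φ).const_smul (τ * exp (C τ))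
  have hφ : HasDerivAt (fun φ' => (τ * exp (C τ)) • sphereDir θ φ')
      ((τ * exp (C τ)) • sphereDirAzimuth θ φ) φ :=
    (hasDerivAt_sphereDir_azimuth θ φ).const_smul (τ * exp (C τ))
  rw [hρ.deriv, hθ.deriv, hφ.deriv]
  have hexp : exp (2 * C τ) = exp (C τ) ^ 2 := by rw [pow_two, ← exp_add, two_mul]
  simp only [norm_smul, mul_pow, norm_eq_abs, sq_abs, real_inner_smul_left, real_inner_smul_right,
    norm_sphereDir_sq, norm_sphereDirPolar_sq, norm_sphereDirAzimuth_sq,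
    inner_sphereDir_sphereDirPolar, inner_sphereDir_sphereDirAzimuth,
    inner_sphereDirPolar_sphereDirAzimuth, hexp]
  refine ⟨?_, ?_, ?_, ?_, ?_, ?_, ?_⟩ <;> ring

/-- The three-dimensional Kruskal-type unwrapping of a warped cone over `S²`: if
`A, B` are continuous on `(0,∞)` with `B` nowhere zero, and `C` satisfies
`τ C'(τ) = A(τ)/B(τ) − 1`, then the map
`Φ(τ,θ,φ) = τ e^{C(τ)}(sin θ cos φ, sin θ sin φ, cos θ)` satisfies
`‖∂Φ/∂τ‖² = e^{2C}(A/B)²`, `‖∂Φ/∂θ‖² = e^{2C} τ²`, `‖∂Φ/∂φ‖² = e^{2C} τ² sin²θ`,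
the three partial derivatives are pairwise orthogonal, and `‖Φ‖² = τ² e^{2C}`. -/
theorem kruskal_unwrapping_three_dim
    (A B : ℝ → ℝ) (hA : ContinuousOn A (Ioi 0)) (hB : ContinuousOn B (Ioi 0))
    (hBne : ∀ τ ∈ Ioi (0:ℝ), B τ ≠ 0)
    (C : ℝ → ℝ) (hC : ∀ τ ∈ Ioi (0:ℝ), HasDerivAt C ((A τ / B τ - 1) / τ) τ) :
    ∀ τ ∈ Ioi (0:ℝ), ∀ θ φ : ℝ,
      ‖deriv (fun τ' => kruskalMap3 C τ' θ φ) τ‖^2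
          = Real.exp (2 * C τ) * (A τ / B τ)^2 ∧
      ‖deriv (fun θ' => kruskalMap3 C τ θ' φ) θ‖^2
          = Real.exp (2 * C τ) * τ^2 ∧
      ‖deriv (fun φ' => kruskalMap3 C τ θ φ') φ‖^2
          = Real.exp (2 * C τ) * τ^2 * (Real.sin θ)^2 ∧
      (inner ℝ (deriv (fun τ' => kruskalMap3 C τ' θ φ) τ)
             (deriv (fun θ' => kruskalMap3 C τ θ' φ) θ) : ℝ) = 0 ∧
      (inner ℝ (deriv (fun τ' => kruskalMap3 C τ' θ φ) τ)
             (deriv (fun φ' => kruskalMap3 C τ θ φ') φ) : ℝ) = 0 ∧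
      (inner ℝ (deriv (fun θ' => kruskalMap3 C τ θ' φ) θ)
             (deriv (fun φ' => kruskalMap3 C τ θ φ') φ) : ℝ) = 0 ∧
      ‖kruskalMap3 C τ θ φ‖^2 = τ^2 * Real.exp (2 * C τ) :=
  kruskal_unwrapping_three_dim_general A B C hC
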